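/- Let N = (D, s, t) be a network and let P be a finite family (multiset) of s–t paths in D. If P is regimented, then there is no P-multicolored s–t path in D. -/

import Mathlib

/-- The edges of a path given as a list of vertices: the pairs of consecutive vertices. -/
def pathEdges {V : Type*} (l : List V) : List (V × V) := l.zip l.tail

/-- `l` is a path from `s` to `v` in the digraph with edge relation `E`: a list of pairwise
distinct vertices, starting at `s`, ending at `v`, consecutive vertices joined by edges. -/
def IsPath {V : Type*} (E : V → V → Prop) (s v : V) (l : List V) : Prop :=
  l.Nodup ∧ l.head? = some s ∧ l.getLast? = some v ∧ l.Chain' E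

/-- Two `s`–`t` paths are innerly disjoint if they share no vertex other than `s` and `t`. -/
def InnerlyDisjoint {V : Type*} (s t : V) (p q : List V) : Prop :=
  ∀ x ∈ p, x ∈ q → x = s ∨ x = t

/-- A family `P` of `N` `s`–`t` paths is regimented if there are pairwise innerly disjoint
`s`–`t` paths `Q_1, …, Q_k` and a partition of the index set (given by `f`) such that every
path of `P` with index in the `j`-th part equals `Q_j`, and the `j`-th part has exactly
`|E(Q_j)| - 1` elements. -/
def Regimented {V : Type*} (E : V → V → Prop) (s t : V) {N : ℕ} (P : Fin N → List V) : Prop :=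
  ∃ (k : ℕ) (Q : Fin k → List V) (f : Fin N → Fin k),
    (∀ j, IsPath E s t (Q j)) ∧
    (∀ j j', j ≠ j' → InnerlyDisjoint s t (Q j) (Q j')) ∧
    (∀ i, P i = Q (f i)) ∧
    (∀ j, (Finset.univ.filter (fun i => f i = j)).card = (pathEdges (Q j)).length - 1)

/-- A path `R` is `P`-multicolored (each path of the family being its own color class) if
there is an injection assigning to each edge of `R` a distinct index `i` such that the edge
lies on the path `P i`. -/
def MulticoloredFam {V : Type*} {N : ℕ} (P : Fin N → List V) (R : List V) : Prop :=
  ∃ g : Fin (pathEdges R).length → Fin N, Function.Injective g ∧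
    ∀ e : Fin (pathEdges R).length, (pathEdges R).get e ∈ pathEdges (P (g e))

/-!
Consecutive edges of an `s`–`t` path `R` meet in a vertex other than `s` and `t`, and such a
vertex lies on at most one of the innerly disjoint paths `Q_j`. Hence in a multicoloring of `R`
all colors come from one class `I_j`, so every edge of `R` is an edge of `Q_j`, which forces
`R = Q_j`. But then the `|E(Q_j)|` edges of `R` need distinct colors from `I_j`, which has only
`|E(Q_j)| - 1` elements.
-/

section

variable {V : Type*}

theorem length_pathEdges (l : List V) : (pathEdges l).length = l.length - 1 := by
  simp [pathEdges]

theorem getElem_pathEdges {l : List V} {i : ℕ} (h : i < (pathEdges l).length) :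
    (pathEdges l)[i] = (l[i]'(by rw [length_pathEdges] at h; omega),
      l[i + 1]'(by rw [length_pathEdges] at h; omega)) := by
  simp [pathEdges]

theorem pathEdges_cons_cons (a b : V) (l : List V) :
    pathEdges (a :: b :: l) = (a, b) :: pathEdges (b :: l) := rfl

theorem length_pathEdges_pos {l : List V} (h : l.head? ≠ l.getLast?) :
    0 < (pathEdges l).length :=
  match l, h with
  | [], h | [_], h => absurd rfl h
  | _ :: _ :: _, _ => Nat.succ_pos _

theorem mem_of_mem_pathEdges {l : List V} {u v : V} (h : (u, v) ∈ pathEdges l) :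
    u ∈ l ∧ v ∈ l :=
  have h' := List.of_mem_zip h
  ⟨h'.1, List.mem_of_mem_tail h'.2⟩

theorem head?_eq_of_mem_pathEdges_cons {a b : V} {l : List V} (hnd : (a :: l).Nodup)
    (h : (a, b) ∈ pathEdges (a :: l)) : l.head? = some b := by
  match l, h with
  | [], h => simp [pathEdges] at h
  | c :: l, h =>
    rw [pathEdges_cons_cons, List.mem_cons, Prod.mk.injEq] at h
    rcases h with ⟨-, rfl⟩ | h
    · rfl
    · exact absurd (mem_of_mem_pathEdges h).1 (List.nodup_cons.1 hnd).1

theorem eq_of_pathEdges_subset : ∀ {R Q : List V}, R.Nodup → Q.Nodup → R.head? = Q.head? →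
    R.getLast? = Q.getLast? → pathEdges R ⊆ pathEdges Q → R = Q
  | [], _, _, _, hh, _, _ => (List.head?_eq_none_iff.1 hh.symm).symm
  | [_], [], _, _, hh, _, _ => by simp at hh
  | [_], [_], _, _, hh, _, _ => by simpa using hh
  | [a], b :: c :: Q, _, hQ, hh, hl, _ => by
    obtain rfl : a = b := by simpa using hh
    rw [List.getLast?_singleton, List.getLast?_cons_cons] at hl
    exact absurd (List.mem_of_getLast? hl.symm) (List.nodup_cons.1 hQ).1
  | a :: b :: R, Q, hR, hQ, hh, hl, hsub => by
    obtain ⟨Q, rfl⟩ : ∃ Q', Q = a :: Q' := by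
      match Q, hh with
      | q :: Q, hh => exact ⟨Q, by simpa using hh.symm⟩
    obtain ⟨Q, rfl⟩ : ∃ Q', Q = b :: Q' := by
      match Q, head?_eq_of_mem_pathEdges_cons hQ (hsub List.mem_cons_self) with
      | q :: Q, hb => exact ⟨Q, by simpa using hb⟩
    refine congrArg (a :: ·) (eq_of_pathEdges_subset hR.of_cons hQ.of_cons rfl ?_ fun e he => ?_)
    · simpa only [List.getLast?_cons_cons] using hl
    · rcases List.mem_cons.1 (hsub (List.mem_cons_of_mem _ he)) with rfl | he'
      · exact absurd (mem_of_mem_pathEdges he).1 (List.nodup_cons.1 hR).1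
      · exact he'

theorem getElem_ne_head_and_ne_getLast {R : List V} {s t : V} (hnd : R.Nodup)
    (hh : R.head? = some s) (hl : R.getLast? = some t) {i : ℕ} (h0 : 0 < i)
    (hi : i + 1 < R.length) :
    R[i] ≠ s ∧ R[i] ≠ t := by
  rw [List.head?_eq_getElem?, List.getElem?_eq_some_iff] at hh
  rw [List.getLast?_eq_getElem?, List.getElem?_eq_some_iff] at hl
  obtain ⟨_, rfl⟩ := hh
  obtain ⟨_, rfl⟩ := hl
  simp only [ne_eq, hnd.getElem_inj_iff]
  omega

theorem coloring_eq_of_innerlyDisjoint {ι : Type*} {Q : ι → List V} {s t : V}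
    (hQ : Pairwise fun j j' => InnerlyDisjoint s t (Q j) (Q j'))
    {R : List V} (hnd : R.Nodup) (hh : R.head? = some s) (hl : R.getLast? = some t)
    (c : Fin (pathEdges R).length → ι) (hc : ∀ n, (pathEdges R).get n ∈ pathEdges (Q (c n)))
    (n n' : Fin (pathEdges R).length) : c n = c n' := by
  have hlen := length_pathEdges R
  have edge : ∀ i (hi : i < (pathEdges R).length),
      (R[i]'(by omega), R[i + 1]'(by omega)) ∈ pathEdges (Q (c ⟨i, hi⟩)) := fun i hi =>
    getElem_pathEdges hi ▸ hc ⟨i, hi⟩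
  have succ : ∀ i (hi : i + 1 < (pathEdges R).length),
      c ⟨i, by omega⟩ = c ⟨i + 1, hi⟩ := by
    intro i hi
    by_contra hne
    have hout := (mem_of_mem_pathEdges (edge i (by omega))).2
    have hin := (mem_of_mem_pathEdges (edge (i + 1) hi)).1
    have := getElem_ne_head_and_ne_getLast hnd hh hl (i := i + 1) (by omega) (by omega)
    rcases hQ hne _ hout hin with h | h <;> tauto
  have base : ∀ i (hi : i < (pathEdges R).length), c ⟨i, hi⟩ = c ⟨0, by omega⟩ := by
    intro i
    induction i with
    | zero => intro; rfl
    | succ i ih => intro hi; rw [← succ i hi, ih]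
  rw [base n n.2, base n' n'.2]

end

theorem regimented_no_multicolored_general {V : Type*} (E : V → V → Prop) (s t : V)
    (hst : s ≠ t) {N : ℕ} (P : Fin N → List V) (hreg : Regimented E s t P) :
    ¬ ∃ R : List V, IsPath E s t R ∧ MulticoloredFam P R := by
  rintro ⟨R, ⟨hnd, hh, hl, -⟩, g, hg, hmem⟩
  obtain ⟨k, Q, f, hQ, hdisj, hPf, hcard⟩ := hreg
  simp only [hPf] at hmem
  have hpos : 0 < (pathEdges R).length :=
    length_pathEdges_pos (by rw [hh, hl]; exact fun h => hst (Option.some_inj.1 h))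
  set j := f (g ⟨0, hpos⟩)
  have hcol : ∀ n, f (g n) = j := fun n =>
    coloring_eq_of_innerlyDisjoint hdisj hnd hh hl (f ∘ g) hmem n _
  have hR : R = Q j := by
    refine eq_of_pathEdges_subset hnd (hQ j).1 (hh.trans (hQ j).2.1.symm)
      (hl.trans (hQ j).2.2.1.symm) fun e he => ?_
    obtain ⟨n, rfl⟩ := List.mem_iff_get.1 he
    exact hcol n ▸ hmem n
  have hle := Finset.card_le_card_of_injOn g (s := Finset.univ)
    (t := Finset.univ.filter (f · = j)) (fun n _ => by simp [hcol]) hg.injOn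
  rw [Finset.card_univ, Fintype.card_fin, hcard, ← hR] at hle
  omega

/-- In a network `(D, s, t)`, a regimented family of `s`–`t` paths admits no
`P`-multicolored `s`–`t` path. -/
theorem regimented_no_multicolored {V : Type*} [Fintype V] (E : V → V → Prop) (s t : V)
    (hst : s ≠ t) (hs : ∀ u v, E u v → v ≠ s) (ht : ∀ u v, E u v → u ≠ t)
    {N : ℕ} (P : Fin N → List V) (hP : ∀ i, IsPath E s t (P i))
    (hreg : Regimented E s t P) :
    ¬ ∃ R : List V, IsPath E s t R ∧ MulticoloredFam P R :=
  regimented_no_multicolored_general E s t hst P hreg
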